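/- Approximate KL-regularized policy improvement: Let (S, A, P, r, γ) be a finite Markov decision process with discount factor γ ∈ [0,1), let π and π' be stationary policies, with π(·|s) absolutely continuous with respect to π'(·|s) for every state s, and let Q̂ : S × A → ℝ satisfy |Q̂(s,a) − Q^π(s,a)| ≤ ε_Q for all (s,a), where ε_Q ≥ 0. Let β > 0, and for each state s define L_s(μ) = E_{a∼μ}[Q̂(s,a)] − β·KL(π(·|s) ‖ μ) for probability distributions μ on A, and let δ_s ≥ 0. Suppose that for every state s, L_s(π'(·|s)) ≥ sup_μ L_s(μ) − δ_s. Then for every initial state s₀ ∈ S, V^{π'}(s₀) − V^π(s₀) ≥ (1/(1−γ)) · E_{s∼d^{π'}_{s₀}}[ β·KL(π(·|s) ‖ π'(·|s)) − δ_s − 2ε_Q ], where d^{π'}_{s₀} is the discounted state visitation distribution of π' started from s₀. -/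

import Mathlib

open scoped BigOperators

/-- A finite Markov decision process over state space `S` and action space `A`. -/
structure MDP (S A : Type) [Fintype S] [Fintype A] where
  /-- transition kernel: `P s a s'` is the probability of moving to `s'` from `s` under action `a` -/
  P : S → A → S → ℝ
  P_nonneg : ∀ s a s', 0 ≤ P s a s'
  P_sum_one : ∀ s a, ∑ s', P s a s' = 1
  /-- reward function -/
  r : S → A → ℝ
  /-- discount factor -/
  γ : ℝ
  γ_nonneg : 0 ≤ γ
  γ_lt_one : γ < 1

variable {S A : Type} [Fintype S] [Fintype A] [DecidableEq S]

/-- `p` is a probability distribution on a finite set. -/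
def IsProb {A : Type} [Fintype A] (p : A → ℝ) : Prop :=
  (∀ a, 0 ≤ p a) ∧ ∑ a, p a = 1

/-- A stationary policy assigns a probability distribution over actions to each state. -/
def IsPolicy (π : S → A → ℝ) : Prop :=
  ∀ s, IsProb (π s)

/-- Distribution of the state at time `t`, starting at `s₀` and following policy `π`. -/
noncomputable def stateDist (M : MDP S A) (π : S → A → ℝ) (s₀ : S) : ℕ → S → ℝ
  | 0, s => if s = s₀ then 1 else 0
  | t + 1, s' => ∑ s, ∑ a, stateDist M π s₀ t s * π s a * M.P s a s'

/-- Value function: expected discounted return of policy `π` started from `s₀`. -/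
noncomputable def V (M : MDP S A) (π : S → A → ℝ) (s₀ : S) : ℝ :=
  ∑' t : ℕ, M.γ ^ t * ∑ s, stateDist M π s₀ t s * ∑ a, π s a * M.r s a

/-- State-action value function of policy `π`. -/
noncomputable def Q (M : MDP S A) (π : S → A → ℝ) (s : S) (a : A) : ℝ :=
  M.r s a + M.γ * ∑ s', M.P s a s' * V M π s'

/-- Advantage function of policy `π`. -/
noncomputable def Adv (M : MDP S A) (π : S → A → ℝ) (s : S) (a : A) : ℝ :=
  Q M π s a - V M π s

/-- Discounted state visitation distribution of policy `π` started from `s₀`. -/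
noncomputable def dvisit (M : MDP S A) (π : S → A → ℝ) (s₀ : S) (s : S) : ℝ :=
  (1 - M.γ) * ∑' t : ℕ, M.γ ^ t * stateDist M π s₀ t s

/-- Kullback–Leibler divergence between distributions on a finite set. -/
noncomputable def KL {A : Type} [Fintype A] (p q : A → ℝ) : ℝ :=
  ∑ a, p a * Real.log (p a / q a)

/-- `p` is absolutely continuous with respect to `q`. -/
def AbsCont {A : Type} [Fintype A] (p q : A → ℝ) : Prop :=
  ∀ a, q a = 0 → p a = 0
section Aux
set_option linter.unusedSectionVars false
variable {S A : Type} [Fintype S] [Fintype A] [DecidableEq S]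

/-- One-step state kernel induced by a policy. -/
noncomputable def kern (M : MDP S A) (π : S → A → ℝ) (s s' : S) : ℝ :=
  ∑ a, π s a * M.P s a s'

lemma kern_nonneg (M : MDP S A) (π : S → A → ℝ) (hπ : IsPolicy π) (s s' : S) :
    0 ≤ kern M π s s' :=
  Finset.sum_nonneg fun a _ => mul_nonneg ((hπ s).1 a) (M.P_nonneg s a s')

lemma kern_sum_one (M : MDP S A) (π : S → A → ℝ) (hπ : IsPolicy π) (s : S) :
    ∑ s', kern M π s s' = 1 := by
  simp only [kern]
  rw [Finset.sum_comm]
  simp only [← Finset.mul_sum, M.P_sum_one, mul_one]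
  exact (hπ s).2

lemma sd_nonneg (M : MDP S A) (π : S → A → ℝ) (hπ : IsPolicy π) (s₀ : S) :
    ∀ t s, 0 ≤ stateDist M π s₀ t s := by
  intro t
  induction t with
  | zero => intro s; simp only [stateDist]; positivity
  | succ t ih =>
    intro s'
    simp only [stateDist]
    exact Finset.sum_nonneg fun s _ => Finset.sum_nonneg fun a _ =>
      mul_nonneg (mul_nonneg (ih s) ((hπ s).1 a)) (M.P_nonneg s a s')

lemma sd_sum_one (M : MDP S A) (π : S → A → ℝ) (hπ : IsPolicy π) (s₀ : S) :
    ∀ t, ∑ s, stateDist M π s₀ t s = 1 := by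
  intro t
  induction t with
  | zero => simp [stateDist]
  | succ t ih =>
    simp only [stateDist]
    rw [Finset.sum_comm]
    have : ∀ s, ∑ s', ∑ a, stateDist M π s₀ t s * π s a * M.P s a s'
        = stateDist M π s₀ t s := by
      intro s
      rw [Finset.sum_comm]
      simp only [mul_assoc, ← Finset.mul_sum, M.P_sum_one, mul_one]
      rw [(hπ s).2, mul_one]
    simp only [this, ih]

lemma sd_le_one (M : MDP S A) (π : S → A → ℝ) (hπ : IsPolicy π) (s₀ : S) (t : ℕ) (s : S) :
    stateDist M π s₀ t s ≤ 1 := by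
  have := sd_sum_one M π hπ s₀ t
  calc stateDist M π s₀ t s ≤ ∑ s', stateDist M π s₀ t s'
        := Finset.single_le_sum (fun s' _ => sd_nonneg M π hπ s₀ t s') (Finset.mem_univ s)
    _ = 1 := this

/-- Markov/shift property: recursion at the start rather than the end. -/
lemma sd_shift (M : MDP S A) (π : S → A → ℝ) (s₀ : S) :
    ∀ t s, stateDist M π s₀ (t+1) s = ∑ s₁, kern M π s₀ s₁ * stateDist M π s₁ t s := by
  intro t
  induction t with
  | zero =>
    intro s
    simp only [stateDist, kern, ite_mul, one_mul, zero_mul, mul_ite, mul_one, mul_zero]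
    rw [Finset.sum_comm]
    simp [Finset.sum_ite_eq, Finset.sum_ite_eq']
  | succ t ih =>
    intro s'
    show (∑ s, ∑ a, stateDist M π s₀ (t+1) s * π s a * M.P s a s') = _
    have : ∀ s a, stateDist M π s₀ (t+1) s * π s a * M.P s a s'
        = ∑ s₁, kern M π s₀ s₁ * (stateDist M π s₁ t s * π s a * M.P s a s') := by
      intro s a
      rw [ih s, Finset.sum_mul, Finset.sum_mul]
      refine Finset.sum_congr rfl fun s₁ _ => ?_
      ring
    simp only [this]
    have e1 : ∀ s : S, (∑ a, ∑ s₁, kern M π s₀ s₁ * (stateDist M π s₁ t s * π s a * M.P s a s'))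
        = ∑ s₁, ∑ a, kern M π s₀ s₁ * (stateDist M π s₁ t s * π s a * M.P s a s') :=
      fun s => Finset.sum_comm
    simp only [e1]
    rw [Finset.sum_comm]
    refine Finset.sum_congr rfl fun s₁ _ => ?_
    simp only [← Finset.mul_sum]
    congr 1

/-- Generalized value: discounted sum of a per-state reward `ρ` along the chain. -/
noncomputable def Vg (M : MDP S A) (π : S → A → ℝ) (ρ : S → ℝ) (s₀ : S) : ℝ :=
  ∑' t : ℕ, M.γ ^ t * ∑ s, stateDist M π s₀ t s * ρ s

lemma abs_g_le (M : MDP S A) (π : S → A → ℝ) (hπ : IsPolicy π) (s₀ : S) (ρ : S → ℝ) (t : ℕ) :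
    |∑ s, stateDist M π s₀ t s * ρ s| ≤ ∑ s, |ρ s| := by
  calc |∑ s, stateDist M π s₀ t s * ρ s| ≤ ∑ s, |stateDist M π s₀ t s * ρ s| :=
        Finset.abs_sum_le_sum_abs _ _
    _ ≤ ∑ s, |ρ s| := by
        refine Finset.sum_le_sum fun s _ => ?_
        rw [abs_mul, abs_of_nonneg (sd_nonneg M π hπ s₀ t s)]
        exact mul_le_of_le_one_left (abs_nonneg _) (sd_le_one M π hπ s₀ t s)

lemma summable_Vg (M : MDP S A) (π : S → A → ℝ) (hπ : IsPolicy π) (s₀ : S) (ρ : S → ℝ) :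
    Summable (fun t : ℕ => M.γ ^ t * ∑ s, stateDist M π s₀ t s * ρ s) := by
  apply Summable.of_norm_bounded (g := fun t : ℕ => M.γ ^ t * ∑ s, |ρ s|)
  · exact (summable_geometric_of_lt_one M.γ_nonneg M.γ_lt_one).mul_right _
  · intro t
    rw [Real.norm_eq_abs, abs_mul, abs_of_nonneg (pow_nonneg M.γ_nonneg t)]
    exact mul_le_mul_of_nonneg_left (abs_g_le M π hπ s₀ ρ t) (pow_nonneg M.γ_nonneg t)

lemma Vg_bellman (M : MDP S A) (π : S → A → ℝ) (hπ : IsPolicy π) (ρ : S → ℝ) (s₀ : S) :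
    Vg M π ρ s₀ = ρ s₀ + M.γ * ∑ s₁, kern M π s₀ s₁ * Vg M π ρ s₁ := by
  have hsum := summable_Vg M π hπ s₀ ρ
  rw [Vg, Summable.tsum_eq_zero_add hsum]
  have h0 : M.γ ^ 0 * ∑ s, stateDist M π s₀ 0 s * ρ s = ρ s₀ := by
    simp [stateDist, Finset.sum_ite_eq', ite_mul]
  rw [h0]
  congr 1
  have hterm : ∀ t : ℕ, M.γ ^ (t+1) * ∑ s, stateDist M π s₀ (t+1) s * ρ s
      = ∑ s₁, kern M π s₀ s₁ * (M.γ * (M.γ ^ t * ∑ s, stateDist M π s₁ t s * ρ s)) := by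
    intro t
    simp only [sd_shift M π s₀ t, Finset.sum_mul, Finset.mul_sum]
    rw [Finset.sum_comm]
    refine Finset.sum_congr rfl fun s₁ _ => ?_
    refine Finset.sum_congr rfl fun s _ => ?_
    rw [pow_succ]
    ring
  simp only [hterm]
  rw [Summable.tsum_finsetSum (fun s₁ _ => by
    exact ((summable_Vg M π hπ s₁ ρ).mul_left M.γ).mul_left (kern M π s₀ s₁))]
  rw [Finset.mul_sum]
  refine Finset.sum_congr rfl fun s₁ _ => ?_
  rw [tsum_mul_left, tsum_mul_left]
  unfold Vg
  ring

/-- Uniqueness of the fixed point of the Bellman-type operator. -/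
lemma bellman_unique {S : Type} [Fintype S] [Nonempty S] (γ : ℝ) (hγ0 : 0 ≤ γ) (hγ1 : γ < 1)
    (K : S → S → ℝ) (hK0 : ∀ s s', 0 ≤ K s s') (hK1 : ∀ s, ∑ s', K s s' = 1)
    (c x y : S → ℝ) (hx : ∀ s, x s = c s + γ * ∑ s', K s s' * x s')
    (hy : ∀ s, y s = c s + γ * ∑ s', K s s' * y s') : x = y := by
  obtain ⟨m, -, hm⟩ := Finset.exists_max_image Finset.univ (fun s => |x s - y s|)
    ⟨Classical.arbitrary S, Finset.mem_univ _⟩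
  have hd : x m - y m = γ * ∑ s', K m s' * (x s' - y s') := by
    rw [hx m, hy m, Finset.mul_sum, Finset.mul_sum, Finset.mul_sum,
      add_sub_add_left_eq_sub, ← Finset.sum_sub_distrib]
    exact Finset.sum_congr rfl fun s' _ => by ring
  have habs : |∑ s', K m s' * (x s' - y s')| ≤ |x m - y m| := by
    calc |∑ s', K m s' * (x s' - y s')| ≤ ∑ s', |K m s' * (x s' - y s')| :=
          Finset.abs_sum_le_sum_abs _ _
      _ ≤ ∑ s', K m s' * |x m - y m| := by
          refine Finset.sum_le_sum fun s' _ => ?_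
          rw [abs_mul, abs_of_nonneg (hK0 m s')]
          exact mul_le_mul_of_nonneg_left (hm s' (Finset.mem_univ _)) (hK0 m s')
      _ = |x m - y m| := by rw [← Finset.sum_mul, hK1, one_mul]
  have key : |x m - y m| ≤ γ * |x m - y m| := by
    calc |x m - y m| = γ * |∑ s', K m s' * (x s' - y s')| := by
          rw [hd, abs_mul, abs_of_nonneg hγ0]
      _ ≤ γ * |x m - y m| := mul_le_mul_of_nonneg_left habs hγ0
  have hzero : |x m - y m| ≤ 0 := by nlinarith [abs_nonneg (x m - y m)]
  funext s
  have := hm s (Finset.mem_univ _)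
  have : |x s - y s| ≤ 0 := le_trans this hzero
  have := abs_nonneg (x s - y s)
  have hxy : |x s - y s| = 0 := le_antisymm ‹|x s - y s| ≤ 0› this
  have := abs_eq_zero.mp hxy
  linarith [sub_eq_zero.mp this]

lemma V_eq_Vg (M : MDP S A) (π : S → A → ℝ) (s : S) :
    V M π s = Vg M π (fun s' => ∑ a, π s' a * M.r s' a) s := rfl

lemma V_bellman (M : MDP S A) (π : S → A → ℝ) (hπ : IsPolicy π) (s : S) :
    V M π s = ∑ a, π s a * Q M π s a := by
  have h := Vg_bellman M π hπ (fun s' => ∑ a, π s' a * M.r s' a) s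
  rw [← V_eq_Vg] at h
  simp only [← V_eq_Vg] at h
  rw [h]
  simp only [Q, Finset.mul_sum, mul_add, Finset.sum_add_distrib, kern, Finset.sum_mul]
  congr 1
  rw [Finset.sum_comm]
  exact Finset.sum_congr rfl fun a _ => Finset.sum_congr rfl fun s₁ _ => by ring

lemma pi_Q_eq (M : MDP S A) (π π' : S → A → ℝ) (s : S) :
    ∑ a, π' s a * Q M π s a
      = (∑ a, π' s a * M.r s a) + M.γ * ∑ s₁, kern M π' s s₁ * V M π s₁ := by
  simp only [Q, mul_add, Finset.sum_add_distrib]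
  congr 1
  simp only [Finset.mul_sum, kern, Finset.sum_mul]
  rw [Finset.sum_comm]
  refine Finset.sum_congr rfl fun s₁ _ => ?_
  refine Finset.sum_congr rfl fun a _ => ?_
  ring

/-- Performance difference lemma. -/
lemma perf_diff {S A : Type} [Fintype S] [Fintype A] [Nonempty S] [DecidableEq S]
    (M : MDP S A) (π π' : S → A → ℝ) (hπ : IsPolicy π) (hπ' : IsPolicy π') (s₀ : S) :
    V M π' s₀ - V M π s₀ = Vg M π' (fun s => ∑ a, π' s a * Adv M π s a) s₀ := by
  set c : S → ℝ := fun s => ∑ a, π' s a * Adv M π s a with hc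
  have hx : ∀ s, (V M π' s - V M π s) = c s + M.γ * ∑ s₁, kern M π' s s₁ * (V M π' s₁ - V M π s₁) := by
    intro s
    have h1 : V M π' s = (∑ a, π' s a * M.r s a) + M.γ * ∑ s₁, kern M π' s s₁ * V M π' s₁ := by
      have := Vg_bellman M π' hπ' (fun s' => ∑ a, π' s' a * M.r s' a) s
      simpa only [← V_eq_Vg] using this
    have h2 : c s = (∑ a, π' s a * M.r s a) + M.γ * (∑ s₁, kern M π' s s₁ * V M π s₁)
        - V M π s := by
      have hA : c s = (∑ a, π' s a * Q M π s a) - (∑ a, π' s a) * V M π s := by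
        rw [hc]
        simp only [Adv, mul_sub, Finset.sum_sub_distrib, Finset.sum_mul]
      rw [hA, (hπ' s).2, one_mul, pi_Q_eq M π π' s]
    rw [h1, h2]
    have : ∑ s₁, kern M π' s s₁ * (V M π' s₁ - V M π s₁)
        = (∑ s₁, kern M π' s s₁ * V M π' s₁) - ∑ s₁, kern M π' s s₁ * V M π s₁ := by
      rw [← Finset.sum_sub_distrib]
      exact Finset.sum_congr rfl fun s₁ _ => by ring
    rw [this]
    ring
  have hy : ∀ s, Vg M π' c s = c s + M.γ * ∑ s₁, kern M π' s s₁ * Vg M π' c s₁ :=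
    fun s => Vg_bellman M π' hπ' c s
  have := bellman_unique M.γ M.γ_nonneg M.γ_lt_one (kern M π')
    (kern_nonneg M π' hπ') (kern_sum_one M π' hπ') c
    (fun s => V M π' s - V M π s) (Vg M π' c) hx hy
  exact congrFun this s₀

lemma KL_self {A : Type} [Fintype A] (p : A → ℝ) : KL p p = 0 := by
  rw [KL]
  refine Finset.sum_eq_zero fun a _ => ?_
  by_cases h : p a = 0
  · simp [h]
  · simp [div_self h]

lemma summable_sd (M : MDP S A) (π : S → A → ℝ) (hπ : IsPolicy π) (s₀ s : S) :
    Summable (fun t : ℕ => M.γ ^ t * stateDist M π s₀ t s) := by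
  apply Summable.of_norm_bounded (g := fun t : ℕ => M.γ ^ t)
  · exact summable_geometric_of_lt_one M.γ_nonneg M.γ_lt_one
  · intro t
    rw [Real.norm_eq_abs, abs_mul, abs_of_nonneg (pow_nonneg M.γ_nonneg t),
      abs_of_nonneg (sd_nonneg M π hπ s₀ t s)]
    exact mul_le_of_le_one_right (pow_nonneg M.γ_nonneg t) (sd_le_one M π hπ s₀ t s)

lemma dvisit_sum (M : MDP S A) (π : S → A → ℝ) (hπ : IsPolicy π) (s₀ : S) (e : S → ℝ) :
    ∑ s, dvisit M π s₀ s * e s = (1 - M.γ) * Vg M π e s₀ := by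
  have hterm : ∀ s : S, dvisit M π s₀ s * e s
      = (1 - M.γ) * ∑' t : ℕ, M.γ ^ t * stateDist M π s₀ t s * e s := by
    intro s
    rw [dvisit, mul_assoc, ← tsum_mul_right]
  simp only [hterm]
  rw [← Finset.mul_sum]
  congr 1
  rw [← Summable.tsum_finsetSum (fun s _ => ((summable_sd M π hπ s₀ s).mul_right (e s)))]
  rw [Vg]
  refine tsum_congr fun t => ?_
  rw [Finset.mul_sum]
  exact Finset.sum_congr rfl fun s _ => by ring

end Aux

/-- **Approximate KL-regularized policy improvement.** -/
theorem approx_kl_regularized_policy_improvement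
    {S A : Type} [Fintype S] [Fintype A] [Nonempty S] [Nonempty A] [DecidableEq S]
    (M : MDP S A) (π π' : S → A → ℝ)
    (hπ : IsPolicy π) (hπ' : IsPolicy π')
    (hac : ∀ s : S, AbsCont (π s) (π' s))
    (Qhat : S → A → ℝ) (εQ : ℝ) (hεQ : 0 ≤ εQ)
    (hQ : ∀ s a, |Qhat s a - Q M π s a| ≤ εQ)
    (β : ℝ) (hβ : 0 < β)
    (δ : S → ℝ) (hδ : ∀ s, 0 ≤ δ s)
    (hopt : ∀ s : S, ∀ μ : A → ℝ, IsProb μ → AbsCont (π s) μ →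
      ((∑ a, μ a * Qhat s a) - β * KL (π s) μ) - δ s ≤
        (∑ a, π' s a * Qhat s a) - β * KL (π s) (π' s)) :
    ∀ s₀ : S,
      (1 / (1 - M.γ)) *
          ∑ s, dvisit M π' s₀ s * (β * KL (π s) (π' s) - δ s - 2 * εQ) ≤
        V M π' s₀ - V M π s₀ := by
  intro s₀
  set e : S → ℝ := fun s => β * KL (π s) (π' s) - δ s - 2 * εQ with he
  set c : S → ℝ := fun s => ∑ a, π' s a * Adv M π s a with hc
  -- per-state inequality : e s ≤ c s
  have hstate : ∀ s, e s ≤ c s := by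
    intro s
    have hopt' := hopt s (π s) (hπ s) (fun a h => h)
    rw [KL_self] at hopt'
    have h1 : ∑ a, π' s a * (Qhat s a - Q M π s a) ≤ εQ := by
      calc ∑ a, π' s a * (Qhat s a - Q M π s a) ≤ ∑ a, π' s a * εQ :=
            Finset.sum_le_sum fun a _ => mul_le_mul_of_nonneg_left
              (le_trans (le_abs_self _) (hQ s a)) ((hπ' s).1 a)
        _ = εQ := by rw [← Finset.sum_mul, (hπ' s).2, one_mul]
    have h2 : ∑ a, π s a * (Q M π s a - Qhat s a) ≤ εQ := by
      calc ∑ a, π s a * (Q M π s a - Qhat s a) ≤ ∑ a, π s a * εQ :=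
            Finset.sum_le_sum fun a _ => mul_le_mul_of_nonneg_left
              (le_trans (le_abs_self _) (by rw [abs_sub_comm]; exact hQ s a)) ((hπ s).1 a)
        _ = εQ := by rw [← Finset.sum_mul, (hπ s).2, one_mul]
    have e1 : ∑ a, π' s a * (Qhat s a - Q M π s a)
        = (∑ a, π' s a * Qhat s a) - ∑ a, π' s a * Q M π s a := by
      rw [← Finset.sum_sub_distrib]; exact Finset.sum_congr rfl fun a _ => by ring
    have e2 : ∑ a, π s a * (Q M π s a - Qhat s a)
        = (∑ a, π s a * Q M π s a) - ∑ a, π s a * Qhat s a := by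
      rw [← Finset.sum_sub_distrib]; exact Finset.sum_congr rfl fun a _ => by ring
    have hV : V M π s = ∑ a, π s a * Q M π s a := V_bellman M π hπ s
    have hcs : c s = (∑ a, π' s a * Q M π s a) - V M π s := by
      rw [hc]
      simp only [Adv, mul_sub, Finset.sum_sub_distrib, ← Finset.sum_mul, (hπ' s).2, one_mul]
    rw [hcs]
    show β * KL (π s) (π' s) - δ s - 2 * εQ ≤ _
    simp only [mul_zero, sub_zero] at hopt'
    linarith [h1, h2, e1, e2, hopt']
  -- rewrite LHS
  rw [dvisit_sum M π' hπ' s₀ e]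
  have hγ : (1 : ℝ) - M.γ > 0 := by linarith [M.γ_lt_one]
  rw [← mul_assoc, one_div, inv_mul_cancel₀ (ne_of_gt hγ), one_mul]
  rw [perf_diff M π π' hπ hπ' s₀]
  rw [Vg, Vg]
  refine Summable.tsum_le_tsum ?_ (summable_Vg M π' hπ' s₀ e) (summable_Vg M π' hπ' s₀ c)
  intro t
  refine mul_le_mul_of_nonneg_left ?_ (pow_nonneg M.γ_nonneg t)
  exact Finset.sum_le_sum fun s _ =>
    mul_le_mul_of_nonneg_left (hstate s) (sd_nonneg M π' hπ' s₀ t s)
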